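/- If I is a proper ideal of Lmc(S), then E(I) = {E_ε(f) : f ∈ I, ε > 0} is an e-filter: it is a z-filter satisfying E(E⁻(E(I))) = E(I). In particular ∅ ∉ E(I), E(I) is closed under finite intersections up to containing a member, and is upward closed in zero sets. -/

import Mathlib

open scoped BoundedContinuousFunction
open WeakDual

/-- A semitopological semigroup: multiplication is separately continuous. -/
class SemitopologicalSemigroup (S : Type*) [TopologicalSpace S] [Mul S] : Prop where
  continuous_mul_left : ∀ s : S, Continuous fun x : S => s * x
  continuous_mul_right : ∀ s : S, Continuous fun x : S => x * s

/-- Left translate `L_s f (x) = f (s x)` as a bounded continuous function. -/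
noncomputable def lTrans {S : Type*} [TopologicalSpace S] [Mul S] [SemitopologicalSemigroup S]
    (s : S) (f : S →ᵇ ℂ) : S →ᵇ ℂ :=
  f.compContinuous ⟨fun x => s * x, SemitopologicalSemigroup.continuous_mul_left s⟩

/-- The left multiplicatively continuous functions: `f ∈ Lmc S` iff `T_μ f` is (bounded)
continuous for every character `μ` of `CB(S) = S →ᵇ ℂ` (i.e. every `μ ∈ βS`). -/
def Lmc (S : Type*) [TopologicalSpace S] [Mul S] [SemitopologicalSemigroup S] :
    Set (S →ᵇ ℂ) :=
  {f | ∀ μ : characterSpace ℂ (S →ᵇ ℂ), Continuous fun s : S => (μ (lTrans s f) : ℂ)}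

/-- `E_ε(f) = {x ∈ S : |f x| ≤ ε}`. -/
def Eset {S : Type*} [TopologicalSpace S] (ε : ℝ) (f : S →ᵇ ℂ) : Set S :=
  {x : S | ‖f x‖ ≤ ε}

/-- A zero set of `Lmc S`: `Z(f) = f⁻¹({0})` for some `f ∈ Lmc S`. -/
def IsZeroSet {S : Type*} [TopologicalSpace S] [Mul S] [SemitopologicalSemigroup S]
    (A : Set S) : Prop :=
  ∃ f ∈ Lmc S, A = {x : S | f x = 0}

/-- `E(I) = {E_ε(f) : f ∈ I, ε > 0}`. -/
def Efam {S : Type*} [TopologicalSpace S] [Mul S] [SemitopologicalSemigroup S]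
    (I : Set (S →ᵇ ℂ)) : Set (Set S) :=
  {A | ∃ f ∈ I, ∃ ε : ℝ, 0 < ε ∧ A = Eset ε f}

/-- `E⁻(𝒜) = {f ∈ Lmc S : E_ε(f) ∈ 𝒜 for all ε > 0}`. -/
def Einv {S : Type*} [TopologicalSpace S] [Mul S] [SemitopologicalSemigroup S]
    (𝒜 : Set (Set S)) : Set (S →ᵇ ℂ) :=
  {f | f ∈ Lmc S ∧ ∀ ε : ℝ, 0 < ε → Eset ε f ∈ 𝒜}

/-- A `z`-filter on `Lmc S`. -/
structure IsZFilter {S : Type*} [TopologicalSpace S] [Mul S] [SemitopologicalSemigroup S]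
    (𝒜 : Set (Set S)) : Prop where
  zero_sets : ∀ A ∈ 𝒜, IsZeroSet A
  not_empty_mem : ∅ ∉ 𝒜
  univ_mem : Set.univ ∈ 𝒜
  inter_mem : ∀ A ∈ 𝒜, ∀ B ∈ 𝒜, A ∩ B ∈ 𝒜
  superset_mem : ∀ A ∈ 𝒜, ∀ B : Set S, IsZeroSet B → A ⊆ B → B ∈ 𝒜

/-- An ideal of the algebra `Lmc S`. -/
structure IsIdealLmc {S : Type*} [TopologicalSpace S] [Mul S] [SemitopologicalSemigroup S]
    (I : Set (S →ᵇ ℂ)) : Prop where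
  subset_lmc : I ⊆ Lmc S
  zero_mem : (0 : S →ᵇ ℂ) ∈ I
  add_mem : ∀ f ∈ I, ∀ g ∈ I, f + g ∈ I
  mul_mem : ∀ f ∈ Lmc S, ∀ g ∈ I, f * g ∈ I

/-- A maximal (proper) ideal of `Lmc S`. -/
def IsMaximalIdealLmc {S : Type*} [TopologicalSpace S] [Mul S] [SemitopologicalSemigroup S]
    (M : Set (S →ᵇ ℂ)) : Prop :=
  IsIdealLmc M ∧ M ≠ Lmc S ∧ ∀ J, IsIdealLmc J → J ≠ Lmc S → M ⊆ J → J = M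

/-- An `e`-filter: a `z`-filter with `E(E⁻(𝒜)) = 𝒜`. -/
def IsEFilter {S : Type*} [TopologicalSpace S] [Mul S] [SemitopologicalSemigroup S]
    (𝒜 : Set (Set S)) : Prop :=
  IsZFilter 𝒜 ∧ Efam (Einv 𝒜) = 𝒜

/-- An `e`-ideal: an ideal with `E⁻(E(I)) = I`. -/
def IsEIdeal {S : Type*} [TopologicalSpace S] [Mul S] [SemitopologicalSemigroup S]
    (I : Set (S →ᵇ ℂ)) : Prop :=
  IsIdealLmc I ∧ Einv (Efam I) = I

/-- An `e`-ultrafilter: a maximal `e`-filter. -/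
def IsEUltrafilter {S : Type*} [TopologicalSpace S] [Mul S] [SemitopologicalSemigroup S]
    (p : Set (Set S)) : Prop :=
  IsEFilter p ∧ ∀ q, IsEFilter q → p ⊆ q → q = p

/-- The sum `p + q` of two families of zero sets: `A ∈ p + q` iff `A = E_ε(f)` for some `ε > 0`,
`f ∈ Lmc S`, with `E_δ(q, f) = {x : λ_x⁻¹(E_δ(f)) ∈ q} ∈ p` for all `δ > 0`. -/
def eAdd {S : Type*} [TopologicalSpace S] [Mul S] [SemitopologicalSemigroup S]
    (p q : Set (Set S)) : Set (Set S) :=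
  {A | ∃ ε : ℝ, 0 < ε ∧ ∃ f ∈ Lmc S, A = Eset ε f ∧
    ∀ δ : ℝ, 0 < δ → {x : S | (fun t => x * t) ⁻¹' Eset δ f ∈ q} ∈ p}

/-- The principal `e`-ultrafilter `e(a) = {E_ε(f) : f ∈ Lmc S, f a = 0, ε > 0}`. -/
def ePrinc {S : Type*} [TopologicalSpace S] [Mul S] [SemitopologicalSemigroup S]
    (a : S) : Set (Set S) :=
  {A | ∃ f ∈ Lmc S, f a = 0 ∧ ∃ ε : ℝ, 0 < ε ∧ A = Eset ε f}


/-!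
Everything rests on `Lmc S` being a norm-closed unital ⋆-subalgebra of `S →ᵇ ℂ`: it is then
closed under the continuous functional calculus, so `φ ∘ f ∈ Lmc S` for `f ∈ Lmc S` and
continuous `φ`. With this, every `E_ε(f)` is the zero set of `max(|f| - ε, 0)`. For `f ∈ I`,
`e = (f̄ / max(γ, |f|)²) f ∈ I` satisfies `|e| ≤ 1` with `e = 1` off `E_γ(f)`; so `E_γ(f) = ∅`
forces `1 ∈ I`, and if `E_γ(f) ⊆ Z(g)` then `Z(g) = E_1((1 + |g|) e)`. Finite intersections
follow from `E_{min(γ,δ)²}(f̄ f + ḡ g) ⊆ E_γ(f) ∩ E_δ(g)` and upward closure.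
-/

open scoped ComplexConjugate

lemma BoundedContinuousFunction.cfc_apply_eq {S : Type*} [TopologicalSpace S] (f : S →ᵇ ℂ)
    {φ : ℂ → ℂ} (hφ : Continuous φ) (x : S) : cfc φ f x = φ (f x) := by
  let δ : (S →ᵇ ℂ) →⋆ₐ[ℂ] ℂ :=
    (ContinuousMap.evalStarAlgHom ℂ ℂ x).comp (BoundedContinuousFunction.toContinuousMapStarₐ ℂ)
  have hδ : Continuous δ := (continuous_apply x).comp BoundedContinuousFunction.continuous_coe
  calc cfc φ f x = cfc φ (algebraMap ℂ ℂ (f x)) := StarAlgHom.map_cfc δ φ f (hφ := hδ)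
    _ = φ (f x) := cfc_algebraMap (f x) φ

lemma BoundedContinuousFunction.star_mul_self_apply {S : Type*} [TopologicalSpace S]
    (f : S →ᵇ ℂ) (x : S) : (star f * f) x = ((‖f x‖ ^ 2 : ℝ) : ℂ) := by
  simp [Complex.conj_mul']

section Lmc

variable {S : Type*} [TopologicalSpace S] [Mul S] [SemitopologicalSemigroup S]

lemma lTrans_add (s : S) (f g : S →ᵇ ℂ) : lTrans s (f + g) = lTrans s f + lTrans s g := rfl

lemma lTrans_sub (s : S) (f g : S →ᵇ ℂ) : lTrans s (f - g) = lTrans s f - lTrans s g := rfl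

lemma lTrans_mul (s : S) (f g : S →ᵇ ℂ) : lTrans s (f * g) = lTrans s f * lTrans s g := rfl

lemma lTrans_star (s : S) (f : S →ᵇ ℂ) : lTrans s (star f) = star (lTrans s f) := rfl

lemma lTrans_algebraMap (s : S) (c : ℂ) :
    lTrans s (algebraMap ℂ (S →ᵇ ℂ) c) = algebraMap ℂ (S →ᵇ ℂ) c := rfl

lemma add_mem_lmc {f g : S →ᵇ ℂ} (hf : f ∈ Lmc S) (hg : g ∈ Lmc S) : f + g ∈ Lmc S := fun μ => by
  simp only [lTrans_add, map_add]
  exact (hf μ).add (hg μ)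

lemma mul_mem_lmc {f g : S →ᵇ ℂ} (hf : f ∈ Lmc S) (hg : g ∈ Lmc S) : f * g ∈ Lmc S := fun μ => by
  simp only [lTrans_mul, map_mul]
  exact (hf μ).mul (hg μ)

lemma star_mem_lmc {f : S →ᵇ ℂ} (hf : f ∈ Lmc S) : star f ∈ Lmc S := fun μ => by
  simpa only [lTrans_star, map_star] using (hf μ).star

lemma algebraMap_mem_lmc (c : ℂ) : algebraMap ℂ (S →ᵇ ℂ) c ∈ Lmc S := fun μ => by
  simpa only [lTrans_algebraMap, AlgHomClass.commutes] using continuous_const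

variable (S) in
def lmcStarSubalgebra : StarSubalgebra ℂ (S →ᵇ ℂ) where
  carrier := Lmc S
  add_mem' := add_mem_lmc
  mul_mem' := mul_mem_lmc
  algebraMap_mem' := algebraMap_mem_lmc
  star_mem' := star_mem_lmc

lemma isClosed_lmc : IsClosed (Lmc S) := by
  refine isSeqClosed_iff_isClosed.mp fun u f hu hf μ => ?_
  have : TendstoUniformly (fun n s => μ (lTrans s (u n))) (fun s => μ (lTrans s f)) .atTop := by
    refine Metric.tendstoUniformly_iff.mpr fun ε hε => ?_
    filter_upwards [Metric.tendsto_nhds.mp hf ε hε] with n hn s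
    calc dist (μ (lTrans s f)) (μ (lTrans s (u n)))
        = ‖μ (lTrans s (f - u n))‖ := by rw [dist_eq_norm, lTrans_sub, map_sub]
      _ ≤ ‖f - u n‖ := (NonUnitalStarAlgHom.norm_apply_le μ _).trans
          (BoundedContinuousFunction.norm_compContinuous_le _ _)
      _ < ε := by rwa [← dist_eq_norm, dist_comm]
  exact this.continuous (.of_forall fun n => hu n μ)

lemma exists_lmc_comp {f : S →ᵇ ℂ} (hf : f ∈ Lmc S) {φ : ℂ → ℂ} (hφ : Continuous φ) :
    ∃ g ∈ Lmc S, ∀ x, g x = φ (f x) :=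
  ⟨cfc φ f, StarAlgebra.elemental.le_of_mem (S := lmcStarSubalgebra S) isClosed_lmc hf
    (cfc_mem_elemental φ f), f.cfc_apply_eq hφ⟩

end Lmc

section Efam

variable {S : Type*} [TopologicalSpace S] [Mul S] [SemitopologicalSemigroup S]
  {I : Set (S →ᵇ ℂ)}

lemma isZeroSet_eset {f : S →ᵇ ℂ} (hf : f ∈ Lmc S) (ε : ℝ) : IsZeroSet (Eset ε f) := by
  obtain ⟨g, hg, hgf⟩ := exists_lmc_comp hf (φ := fun z => ((max (‖z‖ - ε) 0 : ℝ) : ℂ))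
    (by fun_prop)
  exact ⟨g, hg, Set.ext fun x => by simp [Eset, hgf]⟩

lemma IsZeroSet.inter {A B : Set S} (hA : IsZeroSet A) (hB : IsZeroSet B) :
    IsZeroSet (A ∩ B) := by
  obtain ⟨f, hf, rfl⟩ := hA
  obtain ⟨g, hg, rfl⟩ := hB
  refine ⟨star f * f + star g * g,
    add_mem_lmc (mul_mem_lmc (star_mem_lmc hf) hf) (mul_mem_lmc (star_mem_lmc hg) hg),
    Set.ext fun x => ?_⟩
  simp only [Set.mem_inter_iff, Set.mem_ofPred_eq, BoundedContinuousFunction.add_apply,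
    BoundedContinuousFunction.star_mul_self_apply, ← Complex.ofReal_add, Complex.ofReal_eq_zero]
  rw [add_eq_zero_iff_of_nonneg (by positivity) (by positivity)]
  simp

lemma IsIdealLmc.eq_lmc_of_one_mem (hI : IsIdealLmc I) (h1 : 1 ∈ I) : I = Lmc S :=
  hI.subset_lmc.antisymm fun f hf => by simpa using hI.mul_mem f hf 1 h1

lemma IsIdealLmc.exists_eq_one_of_notMem_eset (hI : IsIdealLmc I) {f : S →ᵇ ℂ} (hf : f ∈ I)
    {γ : ℝ} (hγ : 0 < γ) : ∃ e ∈ I, (∀ x, ‖e x‖ ≤ 1) ∧ ∀ x ∉ Eset γ f, e x = 1 := by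
  have hmax (z : ℂ) : 0 < max γ ‖z‖ := lt_max_of_lt_left hγ
  obtain ⟨u, hu, huf⟩ := exists_lmc_comp (hI.subset_lmc hf)
    (φ := fun z => conj z / ((max γ ‖z‖ : ℝ) : ℂ) ^ 2)
    (Continuous.div (by fun_prop) (by fun_prop) fun z => by simpa using (hmax z).ne')
  have he (x : S) : (u * f) x = (((‖f x‖ / max γ ‖f x‖) ^ 2 : ℝ) : ℂ) := by
    simp [huf, div_mul_eq_mul_div, Complex.conj_mul', div_pow]
  refine ⟨u * f, hI.mul_mem u hu f hf, fun x => ?_, fun x hx => ?_⟩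
  · rw [he, Complex.norm_real, Real.norm_eq_abs, abs_of_nonneg (by positivity)]
    exact pow_le_one₀ (by positivity) (div_le_one_of_le₀ (le_max_right _ _) (hmax _).le)
  · simp only [Eset, Set.mem_ofPred_eq, not_le] at hx
    rw [he, max_eq_right hx.le, div_self (hγ.trans hx).ne']
    simp

lemma IsIdealLmc.isZeroSet_of_mem_efam (hI : IsIdealLmc I) {A : Set S} (hA : A ∈ Efam I) :
    IsZeroSet A := by
  obtain ⟨f, hf, ε, -, rfl⟩ := hA
  exact isZeroSet_eset (hI.subset_lmc hf) ε

lemma IsIdealLmc.empty_notMem_efam (hI : IsIdealLmc I) (hproper : I ≠ Lmc S) : ∅ ∉ Efam I := by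
  rintro ⟨f, hf, ε, hε, hempty⟩
  obtain ⟨e, he, -, he_one⟩ := hI.exists_eq_one_of_notMem_eset hf hε
  have : e = 1 := BoundedContinuousFunction.ext fun x => he_one x (hempty ▸ Set.notMem_empty x)
  exact hproper (hI.eq_lmc_of_one_mem (this ▸ he))

lemma IsIdealLmc.univ_mem_efam (hI : IsIdealLmc I) : Set.univ ∈ Efam I :=
  ⟨0, hI.zero_mem, 1, one_pos, by ext; simp [Eset]⟩

lemma IsIdealLmc.mem_efam_of_subset (hI : IsIdealLmc I) {A B : Set S} (hA : A ∈ Efam I)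
    (hB : IsZeroSet B) (hAB : A ⊆ B) : B ∈ Efam I := by
  obtain ⟨f, hf, γ, hγ, rfl⟩ := hA
  obtain ⟨g, hg, rfl⟩ := hB
  obtain ⟨e, he, he_le, he_one⟩ := hI.exists_eq_one_of_notMem_eset hf hγ
  obtain ⟨u, hu, hug⟩ := exists_lmc_comp hg (φ := fun z => ((1 + ‖z‖ : ℝ) : ℂ)) (by fun_prop)
  have hue (x : S) : ‖(u * e) x‖ = (1 + ‖g x‖) * ‖e x‖ := by
    rw [BoundedContinuousFunction.mul_apply, norm_mul, hug, Complex.norm_real, Real.norm_eq_abs,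
      abs_of_nonneg (by positivity)]
  refine ⟨u * e, hI.mul_mem u hu e he, 1, one_pos, Set.ext fun x => ?_⟩
  simp only [Eset, Set.mem_ofPred_eq, hue]
  by_cases hgx : g x = 0
  · simpa [hgx] using he_le x
  · have hx : x ∉ Eset γ f := fun hx => hgx (hAB hx)
    simp only [hgx, false_iff, not_le, he_one x hx, norm_one, mul_one]
    simpa using hgx

lemma IsIdealLmc.inter_mem_efam (hI : IsIdealLmc I) {A B : Set S} (hA : A ∈ Efam I)
    (hB : B ∈ Efam I) : A ∩ B ∈ Efam I := by
  have hAB := (hI.isZeroSet_of_mem_efam hA).inter (hI.isZeroSet_of_mem_efam hB)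
  obtain ⟨f, hf, γ, hγ, rfl⟩ := hA
  obtain ⟨g, hg, δ, hδ, rfl⟩ := hB
  have hk : star f * f + star g * g ∈ I := hI.add_mem _
    (hI.mul_mem _ (star_mem_lmc (hI.subset_lmc hf)) f hf) _
    (hI.mul_mem _ (star_mem_lmc (hI.subset_lmc hg)) g hg)
  refine hI.mem_efam_of_subset ⟨_, hk, min γ δ ^ 2, by positivity, rfl⟩ hAB fun x hx => ?_
  simp only [Eset, Set.mem_ofPred_eq, BoundedContinuousFunction.add_apply,
    BoundedContinuousFunction.star_mul_self_apply, ← Complex.ofReal_add, Complex.norm_real,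
    Real.norm_eq_abs, abs_of_nonneg (by positivity : 0 ≤ ‖f x‖ ^ 2 + ‖g x‖ ^ 2)] at hx
  have hm : 0 ≤ min γ δ := le_min hγ.le hδ.le
  have hfx : ‖f x‖ ≤ min γ δ := by nlinarith [sq_nonneg ‖g x‖, norm_nonneg (f x)]
  have hgx : ‖g x‖ ≤ min γ δ := by nlinarith [sq_nonneg ‖f x‖, norm_nonneg (g x)]
  exact ⟨hfx.trans (min_le_left γ δ), hgx.trans (min_le_right γ δ)⟩

lemma efam_einv_efam (hI : I ⊆ Lmc S) : Efam (Einv (Efam I)) = Efam I := by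
  refine Set.Subset.antisymm ?_ ?_
  · rintro A ⟨f, ⟨-, hf⟩, ε, hε, rfl⟩
    exact hf ε hε
  · rintro A ⟨f, hf, ε, hε, rfl⟩
    exact ⟨f, ⟨hI hf, fun δ hδ => ⟨f, hf, δ, hδ, rfl⟩⟩, ε, hε, rfl⟩

end Efam

theorem stmt9_general {S : Type*} [TopologicalSpace S] [Semigroup S]
    [SemitopologicalSemigroup S] (I : Set (S →ᵇ ℂ)) (hI : IsIdealLmc I)
    (hproper : I ≠ Lmc S) :
    IsEFilter (Efam I) :=
  ⟨⟨fun _ => hI.isZeroSet_of_mem_efam, hI.empty_notMem_efam hproper, hI.univ_mem_efam,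
    fun _ hA _ hB => hI.inter_mem_efam hA hB, fun _ hA _ hB => hI.mem_efam_of_subset hA hB⟩,
    efam_einv_efam hI.subset_lmc⟩

theorem stmt9 {S : Type*} [TopologicalSpace S] [T2Space S] [Semigroup S]
    [SemitopologicalSemigroup S] (I : Set (S →ᵇ ℂ)) (hI : IsIdealLmc I)
    (hproper : I ≠ Lmc S) :
    IsEFilter (Efam I) :=
  stmt9_general I hI hproper
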